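/- arXiv:1106.3136 — 3 statements merged into one kernel-verified Lean document; each statement's English description precedes it below -/
import Mathlib

section
/- (Finite-difference equation for the K-theoretic J-function of CP^{n−1}.) Assume in addition that (1−P)^n = 0 in R (the relation satisfied by the Hopf bundle class P in K^0(CP^{n−1})). Then (1 − T)^n J = Q · J in R[[Q]]. -/
/-!
`T` acts diagonally on coefficients, so `(1 - T)^n` multiplies the coefficient of `Q^d` by
`(1 - P q^d)^n`. The defining products of the `a_d` give `(1 - P q^(d+1))^n a_(d+1) = a_d`,
which is exactly the shift by `Q`, while the constant coefficient is killed by `(1 - P)^n = 0`.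
-/

/-- The finite-difference operator `T = P q^{Q∂_Q}` on `R[[Q]]`, multiplying the
coefficient of `Q^d` by `P q^d`. -/
noncomputable def diffOpT (R : Type*) [CommRing R] (P q : R) :
    Module.End R (PowerSeries R) where
  toFun f := PowerSeries.mk fun d => P * q ^ d * PowerSeries.coeff (R := R) d f
  map_add' f g := by
    ext d
    simp [mul_add]
  map_smul' c f := by
    ext d
    simp [PowerSeries.coeff_mk, smul_eq_mul]
    ring

lemma pow_mul_succ_eq_of_mul_prod_pow_eq_one {M : Type*} [CommMonoid M] {u a : ℕ → M}
    {n : ℕ} (ha : ∀ d, a d * (∏ r ∈ Finset.Icc 1 d, u r) ^ n = 1) (d : ℕ) :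
    u (d + 1) ^ n * a (d + 1) = a d := by
  calc u (d + 1) ^ n * a (d + 1)
      = u (d + 1) ^ n * a (d + 1) * ((∏ r ∈ Finset.Icc 1 d, u r) ^ n * a d) := by
        rw [mul_comm _ (a d), ha d, mul_one]
    _ = a (d + 1) * (∏ r ∈ Finset.Icc 1 (d + 1), u r) ^ n * a d := by
        rw [Finset.prod_Icc_succ_top (by omega), mul_pow]
        ac_rfl
    _ = a d := by rw [ha (d + 1), one_mul]

namespace diffOpT

variable {R : Type*} [CommRing R] (P q : R)

lemma coeff_apply (f : PowerSeries R) (d : ℕ) :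
    PowerSeries.coeff d (diffOpT R P q f) = P * q ^ d * PowerSeries.coeff d f := by
  simp [diffOpT]

lemma coeff_one_sub_pow_apply (m : ℕ) (f : PowerSeries R) (d : ℕ) :
    PowerSeries.coeff d (((1 - diffOpT R P q) ^ m) f) =
      (1 - P * q ^ d) ^ m * PowerSeries.coeff d f := by
  induction m with
  | zero => simp
  | succ m ih =>
    rw [pow_succ', Module.End.mul_apply, LinearMap.sub_apply, Module.End.one_apply, map_sub,
      coeff_apply, ih]
    ring

lemma one_sub_pow_mk_eq_X_mul {n : ℕ} {a : ℕ → R} (h0 : (1 - P) ^ n * a 0 = 0)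
    (hrec : ∀ d, (1 - P * q ^ (d + 1)) ^ n * a (d + 1) = a d) :
    ((1 - diffOpT R P q) ^ n) (PowerSeries.mk a) = PowerSeries.X * PowerSeries.mk a := by
  ext d
  rw [coeff_one_sub_pow_apply, PowerSeries.coeff_mk]
  cases d with
  | zero => simpa using h0
  | succ d => rw [PowerSeries.coeff_succ_X_mul, PowerSeries.coeff_mk, hrec]

end diffOpT

theorem stmt2_general (R : Type*) [CommRing R] (q P : R) (n : ℕ)
    (a : ℕ → R)
    (ha : ∀ d : ℕ, a d * (∏ r ∈ Finset.Icc 1 d, (1 - P * q ^ r)) ^ n = 1)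
    (hP : (1 - P) ^ n = 0) :
    ((1 - diffOpT R P q) ^ n) (PowerSeries.C (R := R) (1 - q) * PowerSeries.mk a) =
      PowerSeries.X * (PowerSeries.C (R := R) (1 - q) * PowerSeries.mk a) := by
  have hJ : ((1 - diffOpT R P q) ^ n) (PowerSeries.mk a) = PowerSeries.X * PowerSeries.mk a :=
    diffOpT.one_sub_pow_mk_eq_X_mul P q (by rw [hP, zero_mul])
      (pow_mul_succ_eq_of_mul_prod_pow_eq_one ha)
  rw [← PowerSeries.smul_eq_C_mul, map_smul, hJ, mul_smul_comm]

/-- With `a_d = ∏_{r=1}^d (1−Pq^r)^{−n}`, `J = (1−q)·Σ_d a_d Q^d`, and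
`(1−P)^n = 0` (the relation for the Hopf bundle class on `CP^{n−1}`), the K-theoretic
J-function satisfies the finite-difference equation `(1−T)^n J = Q·J`. -/
theorem stmt2 (R : Type*) [CommRing R] (q P : R) (n : ℕ) (hn : 1 ≤ n)
    (hu : ∀ r : ℕ, 1 ≤ r → IsUnit (1 - P * q ^ r))
    (a : ℕ → R)
    (ha : ∀ d : ℕ, a d * (∏ r ∈ Finset.Icc 1 d, (1 - P * q ^ r)) ^ n = 1)
    (hP : (1 - P) ^ n = 0) :
    ((1 - diffOpT R P q) ^ n) (PowerSeries.C (R := R) (1 - q) * PowerSeries.mk a) =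
      PowerSeries.X * (PowerSeries.C (R := R) (1 - q) * PowerSeries.mk a) :=
  stmt2_general R q P n a ha hP
end

section
/- Let n and k be natural numbers with n > 4, and let l_1, ..., l_k be integers with each l_j ≥ 2 and l_1² + ... + l_k² ≤ n. Then for every integer d ≥ 1: 2 + Σ_{j=1}^{k} l_j d (l_j d + 1) < n d (d+1). (Equivalently, 1 + Σ_j l_j d (l_j d + 1)/2 < n d(d+1)/2; this inequality guarantees that the coefficient of Q^d in the series I_X is a reduced rational function of q.) -/
/-! Expanding, `∑ lⱼ d (lⱼ d + 1) = (∑ lⱼ²) d² + (∑ lⱼ) d`. The first sum is at most `n`, and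
`lⱼ ≥ 2` gives `2 lⱼ ≤ lⱼ²`, so the second is at most `n / 2`. The left side is thus at most
`2 + n d² + n d / 2`, which is below `n d² + n d` as soon as `n d > 4`. -/

open Finset

variable {ι R : Type*} [CommRing R]

theorem sum_mul_mul_add_one (s : Finset ι) (f : ι → R) (d : R) :
    ∑ i ∈ s, f i * d * (f i * d + 1) = (∑ i ∈ s, f i ^ 2) * d ^ 2 + (∑ i ∈ s, f i) * d := by
  rw [sum_mul, sum_mul, ← sum_add_distrib]
  exact sum_congr rfl fun i _ => by ring

theorem two_mul_sum_le_sum_sq_of_two_le [LinearOrder R] [IsStrictOrderedRing R]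
    {s : Finset ι} {f : ι → R} (hf : ∀ i ∈ s, 2 ≤ f i) :
    2 * ∑ i ∈ s, f i ≤ ∑ i ∈ s, f i ^ 2 := by
  rw [mul_sum]
  refine sum_le_sum fun i hi => ?_
  have h2 := hf i hi
  nlinarith

/-- If `n > 4`, each `l_j ≥ 2`, and `l_1² + ⋯ + l_k² ≤ n`, then for every
integer `d ≥ 1`: `2 + Σ_j l_j d (l_j d + 1) < n d (d+1)`. -/
theorem stmt7 (n k : ℕ) (hn : 4 < n) (l : Fin k → ℤ) (hl : ∀ j, 2 ≤ l j)
    (hsum : ∑ j, (l j) ^ 2 ≤ (n : ℤ)) (d : ℤ) (hd : 1 ≤ d) :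
    2 + ∑ j, l j * d * (l j * d + 1) < (n : ℤ) * d * (d + 1) := by
  have hlin : 2 * ∑ j, l j ≤ n := (two_mul_sum_le_sum_sq_of_two_le fun j _ => hl j).trans hsum
  have hsq : (∑ j, l j ^ 2) * d ^ 2 ≤ n * d ^ 2 := mul_le_mul_of_nonneg_right hsum (sq_nonneg d)
  have hnd : 4 < (n : ℤ) * d := by
    have : (5 : ℤ) ≤ n := by exact_mod_cast hn
    nlinarith
  rw [sum_mul_mul_add_one]
  nlinarith [mul_le_mul_of_nonneg_right hlin (zero_le_one.trans hd)]
end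

section
/- The form Ω is antisymmetric: for all rational functions f, g ∈ ℂ(X), Ω(f,g) = −Ω(g,f). (This is the scalar version of the claim that Ω(f,g) = [Res_{q=0}+Res_{q=∞}] (f(q), g(q^{−1})) dq/q defines an antisymmetric, i.e. symplectic, bilinear form on the loop space K.) -/
/-- `Res_a(h)`: the coefficient of `(X−a)^{−1}` in the Laurent expansion of the rational
function `h` at `a` (computed via the shift `X ↦ X + a` and the Laurent-series expansion
at `0`). -/
noncomputable def ratRes (a : ℂ) (h : RatFunc ℂ) : ℂ :=
  ((RatFunc.laurent a h : RatFunc ℂ) : LaurentSeries ℂ).coeff (-1)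

/-- `h(X⁻¹)`: the image of `h` under the automorphism of `ℂ(X)` sending `X` to `X⁻¹`. -/
noncomputable def invSubst (h : RatFunc ℂ) : RatFunc ℂ :=
  RatFunc.eval (RatFunc.C : ℂ →+* RatFunc ℂ) (RatFunc.X⁻¹) h

/-- The residue at infinity: `Res_∞(h) := −Res_0(X^{−2}·h(X^{−1}))`. -/
noncomputable def ratResInf (h : RatFunc ℂ) : ℂ :=
  - ratRes 0 (RatFunc.X ^ (-2 : ℤ) * invSubst h)

/-- `Ω(f,g) := [Res_{q=0}+Res_{q=∞}] f(q)·g(q⁻¹)·dq/q`. -/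
noncomputable def OmegaForm (f g : RatFunc ℂ) : ℂ :=
  ratRes 0 (f * invSubst g * RatFunc.X⁻¹) + ratResInf (f * invSubst g * RatFunc.X⁻¹)

/-! Since `X⁻¹` is transcendental, `X ↦ X⁻¹` extends to an involutive automorphism `σ` of `K(X)`.
Applying it to `F = f · σg · X⁻¹` gives `X⁻² · σF = g · σf · X⁻¹ =: G`, so
`Res_∞ F = -Res_0 G` and `Ω(f, g) = Res_0 F - Res_0 G`, which is visibly antisymmetric. -/

namespace RatFunc

open Polynomial

variable {K : Type*} [Field K]

theorem transcendental_X_inv : Transcendental K (X⁻¹ : RatFunc K) :=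
  fun h => transcendental_X (IsAlgebraic.inv_iff.mp h)

noncomputable def invX : RatFunc K →ₐ[K] RatFunc K :=
  liftAlgHom (aeval X⁻¹) <| nonZeroDivisors_le_comap_nonZeroDivisors_of_injective _ <|
    transcendental_iff_injective.mp transcendental_X_inv

theorem invX_algebraMap_div (p q : K[X]) :
    invX (algebraMap K[X] (RatFunc K) p / algebraMap K[X] (RatFunc K) q) =
      aeval X⁻¹ p / aeval X⁻¹ q :=
  liftAlgHom_apply_div _ _ p q

theorem invX_X : invX (X : RatFunc K) = X⁻¹ := by
  simpa using invX_algebraMap_div (K := K) Polynomial.X 1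

theorem invX_invX (h : RatFunc K) : invX (invX h) = h := by
  rw [← num_div_denom h, invX_algebraMap_div, map_div₀, ← aeval_algHom_apply,
    ← aeval_algHom_apply, map_inv₀, invX_X, inv_inv, aeval_X_left_eq_algebraMap,
    aeval_X_left_eq_algebraMap]

end RatFunc

open RatFunc

theorem invSubst_eq_invX (h : RatFunc ℂ) : invSubst h = invX h := by
  conv_rhs => rw [← num_div_denom h, invX_algebraMap_div]
  rw [invSubst, RatFunc.eval]
  simp only [Polynomial.aeval_def, algebraMap_eq_C]

theorem ratResInf_mul_invSubst_mul_X_inv (f g : RatFunc ℂ) :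
    ratResInf (f * invSubst g * X⁻¹) = - ratRes 0 (g * invSubst f * X⁻¹) := by
  rw [ratResInf, neg_inj]
  congr 1
  simp only [invSubst_eq_invX, map_mul, map_inv₀, invX_invX, invX_X, inv_inv]
  field_simp

/-- The form `Ω` is antisymmetric: `Ω(f,g) = −Ω(g,f)`. -/
theorem stmt14 (f g : RatFunc ℂ) : OmegaForm f g = - OmegaForm g f := by
  simp only [OmegaForm, ratResInf_mul_invSubst_mul_X_inv]
  ring
end
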